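/- With γ, b, n, t, κ_g, κ_n as above and λ₀ ∈ ℝ⁴_2, define h(s) = ⟨γ(s), λ₀⟩ + 1. If κ_g(s₀) ± κ_n(s₀) ≠ 0 and λ₀ = γ(s₀) + (1/(κ_g(s₀) ± κ_n(s₀)))(b(s₀) ± n(s₀)), then h(s₀) = h'(s₀) = h''(s₀) = 0. -/

import Mathlib

/-- The index-2 pseudo scalar product on ℝ⁴. -/
def pseudo4 (x y : Fin 4 → ℝ) : ℝ :=
  ∑ i : Fin 4, (if (i : ℕ) < 2 then (-1 : ℝ) else 1) * x i * y i

/-!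
The height function h = ⟨γ, λ₀⟩ + 1 has h' = ⟨t, λ₀⟩ and h'' = ⟨γ - κ_g b + κ_n n, λ₀⟩, so all
three values at s₀ are pairings of frame vectors with λ₀ = γ + c⁻¹ (b ± n), c = κ_g ± κ_n.
By pseudo-orthonormality ⟨γ, λ₀⟩ = -1, ⟨t, λ₀⟩ = 0, and ⟨-κ_g b + κ_n n, λ₀⟩ = c⁻¹ (κ_g ± κ_n) = 1.
-/

section Pseudo4

variable (x y z : Fin 4 → ℝ) (c : ℝ)

lemma pseudo4_comm : pseudo4 x y = pseudo4 y x := by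
  simp only [pseudo4]; congr 1; ext i; ring

lemma pseudo4_add_left : pseudo4 (x + y) z = pseudo4 x z + pseudo4 y z := by
  simp only [pseudo4, Pi.add_apply, ← Finset.sum_add_distrib]; congr 1; ext i; ring

lemma pseudo4_sub_left : pseudo4 (x - y) z = pseudo4 x z - pseudo4 y z := by
  simp only [pseudo4, Pi.sub_apply, ← Finset.sum_sub_distrib]; congr 1; ext i; ring

lemma pseudo4_smul_left : pseudo4 (c • x) z = c * pseudo4 x z := by
  simp only [pseudo4, Pi.smul_apply, smul_eq_mul, Finset.mul_sum]; congr 1; ext i; ring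

lemma pseudo4_add_right : pseudo4 z (x + y) = pseudo4 z x + pseudo4 z y := by
  rw [pseudo4_comm, pseudo4_add_left, pseudo4_comm x, pseudo4_comm y]

lemma pseudo4_smul_right : pseudo4 z (c • x) = c * pseudo4 z x := by
  rw [pseudo4_comm, pseudo4_smul_left, pseudo4_comm x]

end Pseudo4

lemma HasDerivAt.pseudo4_const {f : ℝ → Fin 4 → ℝ} {d : Fin 4 → ℝ} {s : ℝ}
    (hf : HasDerivAt f d s) (v : Fin 4 → ℝ) :
    HasDerivAt (fun s => pseudo4 (f s) v) (pseudo4 d v) s := by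
  have hcoord (i : Fin 4) : HasDerivAt (fun s => f s i) (d i) s := hasDerivAt_pi.mp hf i
  exact HasDerivAt.fun_sum fun i _ => ((hcoord i).const_mul _).mul_const _

section Frame

variable {g b n t : Fin 4 → ℝ}

lemma pseudo4_self_focal (hgg : pseudo4 g g = -1) (hgb : pseudo4 g b = 0)
    (hgn : pseudo4 g n = 0) (c ε : ℝ) :
    pseudo4 g (g + c • (b + ε • n)) = -1 := by
  rw [pseudo4_add_right, pseudo4_smul_right, pseudo4_add_right, pseudo4_smul_right, hgg, hgb,
    hgn]
  ring

lemma pseudo4_tangent_focal (hgt : pseudo4 g t = 0) (hbt : pseudo4 b t = 0)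
    (hnt : pseudo4 n t = 0) (c ε : ℝ) :
    pseudo4 t (g + c • (b + ε • n)) = 0 := by
  rw [pseudo4_add_right, pseudo4_smul_right, pseudo4_add_right, pseudo4_smul_right,
    pseudo4_comm t g, pseudo4_comm t b, pseudo4_comm t n, hgt, hbt, hnt]
  ring

lemma pseudo4_curvature_focal (hgg : pseudo4 g g = -1) (hbb : pseudo4 b b = -1)
    (hnn : pseudo4 n n = 1) (hgb : pseudo4 g b = 0) (hgn : pseudo4 g n = 0)
    (hbn : pseudo4 b n = 0) {κg κn ε : ℝ} (hne : κg + ε * κn ≠ 0) :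
    pseudo4 (g - κg • b + κn • n) (g + (κg + ε * κn)⁻¹ • (b + ε • n)) = 0 := by
  have hb : pseudo4 b (g + (κg + ε * κn)⁻¹ • (b + ε • n)) = -(κg + ε * κn)⁻¹ := by
    rw [pseudo4_add_right, pseudo4_smul_right, pseudo4_add_right, pseudo4_smul_right,
      pseudo4_comm b g, hgb, hbb, hbn]
    ring
  have hn : pseudo4 n (g + (κg + ε * κn)⁻¹ • (b + ε • n)) = ε * (κg + ε * κn)⁻¹ := by
    rw [pseudo4_add_right, pseudo4_smul_right, pseudo4_add_right, pseudo4_smul_right,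
      pseudo4_comm n g, hgn, pseudo4_comm n b, hbn, hnn]
    ring
  rw [pseudo4_add_left, pseudo4_sub_left, pseudo4_smul_left, pseudo4_smul_left,
    pseudo4_self_focal hgg hgb hgn, hb, hn]
  field_simp
  ring

end Frame

theorem stmt_12_general (γ b n t : ℝ → Fin 4 → ℝ) (κg κn : ℝ → ℝ)
    (hγd : Differentiable ℝ γ)
    (htd : Differentiable ℝ t)
    (hγ' : ∀ s, deriv γ s = t s)
    (ht' : ∀ s, deriv t s = γ s - κg s • b s + κn s • n s)
    (hγγ : ∀ s, pseudo4 (γ s) (γ s) = -1)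
    (hbb : ∀ s, pseudo4 (b s) (b s) = -1)
    (hnn : ∀ s, pseudo4 (n s) (n s) = 1)
    (hγb : ∀ s, pseudo4 (γ s) (b s) = 0)
    (hγn : ∀ s, pseudo4 (γ s) (n s) = 0)
    (hγt : ∀ s, pseudo4 (γ s) (t s) = 0)
    (hbn : ∀ s, pseudo4 (b s) (n s) = 0)
    (hbt : ∀ s, pseudo4 (b s) (t s) = 0)
    (hnt : ∀ s, pseudo4 (n s) (t s) = 0)
    (ε : ℝ)
    (s₀ : ℝ) (hne : κg s₀ + ε * κn s₀ ≠ 0)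
    (lam₀ : Fin 4 → ℝ)
    (hlam : lam₀ = γ s₀ + (κg s₀ + ε * κn s₀)⁻¹ • (b s₀ + ε • n s₀))
    (h : ℝ → ℝ) (hh : h = fun s => pseudo4 (γ s) lam₀ + 1) :
    h s₀ = 0 ∧ deriv h s₀ = 0 ∧ deriv (deriv h) s₀ = 0 := by
  have h' : deriv h = fun s => pseudo4 (t s) lam₀ := funext fun s => by
    rw [hh, ← hγ' s]
    exact (((hγd s).hasDerivAt.pseudo4_const lam₀).add_const 1).deriv
  have h'' : deriv (deriv h) s₀ = pseudo4 (γ s₀ - κg s₀ • b s₀ + κn s₀ • n s₀) lam₀ := by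
    rw [h', ← ht' s₀]
    exact ((htd s₀).hasDerivAt.pseudo4_const lam₀).deriv
  subst hlam
  refine ⟨?_, ?_, ?_⟩
  · simp only [hh, pseudo4_self_focal (hγγ s₀) (hγb s₀) (hγn s₀), neg_add_cancel]
  · rw [h']
    exact pseudo4_tangent_focal (hγt s₀) (hbt s₀) (hnt s₀) _ _
  · rw [h'', pseudo4_curvature_focal (hγγ s₀) (hbb s₀) (hnn s₀) (hγb s₀) (hγn s₀) (hbn s₀) hne]

/-- If λ₀ = γ(s₀) + (κ_g(s₀) ± κ_n(s₀))⁻¹ (b(s₀) ± n(s₀)), then the AdS height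
function h(s) = ⟨γ(s),λ₀⟩ + 1 vanishes to second order at s₀.
The sign ± is encoded by ε ∈ {1,-1}. -/
theorem stmt_12 (γ b n t : ℝ → Fin 4 → ℝ) (κg κn τg : ℝ → ℝ)
    (hγd : Differentiable ℝ γ) (hbd : Differentiable ℝ b)
    (hnd : Differentiable ℝ n) (htd : Differentiable ℝ t)
    (hγ' : ∀ s, deriv γ s = t s)
    (hb' : ∀ s, deriv b s = τg s • n s - κg s • t s)
    (hn' : ∀ s, deriv n s = τg s • b s - κn s • t s)
    (ht' : ∀ s, deriv t s = γ s - κg s • b s + κn s • n s)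
    (hγγ : ∀ s, pseudo4 (γ s) (γ s) = -1)
    (hbb : ∀ s, pseudo4 (b s) (b s) = -1)
    (hnn : ∀ s, pseudo4 (n s) (n s) = 1)
    (htt : ∀ s, pseudo4 (t s) (t s) = 1)
    (hγb : ∀ s, pseudo4 (γ s) (b s) = 0)
    (hγn : ∀ s, pseudo4 (γ s) (n s) = 0)
    (hγt : ∀ s, pseudo4 (γ s) (t s) = 0)
    (hbn : ∀ s, pseudo4 (b s) (n s) = 0)
    (hbt : ∀ s, pseudo4 (b s) (t s) = 0)
    (hnt : ∀ s, pseudo4 (n s) (t s) = 0)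
    (ε : ℝ) (hε : ε = 1 ∨ ε = -1)
    (s₀ : ℝ) (hne : κg s₀ + ε * κn s₀ ≠ 0)
    (lam₀ : Fin 4 → ℝ)
    (hlam : lam₀ = γ s₀ + (κg s₀ + ε * κn s₀)⁻¹ • (b s₀ + ε • n s₀))
    (h : ℝ → ℝ) (hh : h = fun s => pseudo4 (γ s) lam₀ + 1) :
    h s₀ = 0 ∧ deriv h s₀ = 0 ∧ deriv (deriv h) s₀ = 0 :=
  stmt_12_general γ b n t κg κn hγd htd hγ' ht' hγγ hbb hnn hγb hγn hγt hbn hbt hnt ε s₀ hne lam₀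
    hlam h hh
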